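/- Let G be a minor minimal not-apex graph of connectivity 2 with 2-cut {a,b} and G - a, b = G_1 ⊔ G_2, where G_i + a denotes the induced subgraph on V(G_i) ∪ {a}. Then, up to swapping G_1 and G_2, the graphs G_1 + a and G_1 + b are planar while G_2 + a and G_2 + b are nonplanar. -/

import Mathlib

open SimpleGraph

def K5 : SimpleGraph (Fin 5) := ⊤

def K33 : SimpleGraph (Fin 3 ⊕ Fin 3) := completeBipartiteGraph (Fin 3) (Fin 3)

/-- `H` is a minor of `G`: branch-set (model) definition. -/
def IsMinor {W V : Type} (H : SimpleGraph W) (G : SimpleGraph V) : Prop :=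
  ∃ f : W → Set V,
    (∀ w, (f w).Nonempty) ∧
    (∀ w, (G.induce (f w)).Connected) ∧
    (Pairwise fun w₁ w₂ => Disjoint (f w₁) (f w₂)) ∧
    (∀ w₁ w₂, H.Adj w₁ w₂ → ∃ x ∈ f w₁, ∃ y ∈ f w₂, G.Adj x y)

/-- Planarity, via Wagner's theorem: no `K₅` minor and no `K₃,₃` minor. -/
def Planar {V : Type} (G : SimpleGraph V) : Prop :=
  ¬ IsMinor K5 G ∧ ¬ IsMinor K33 G

def ProperMinor {W V : Type} (H : SimpleGraph W) (G : SimpleGraph V) : Prop :=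
  IsMinor H G ∧ ¬ IsMinor G H

def MinorMinimal (P : {V : Type} → SimpleGraph V → Prop) {V : Type} (G : SimpleGraph V) : Prop :=
  P G ∧ ∀ (W : Type) (H : SimpleGraph W), ProperMinor H G → ¬ P H

/-- `G` together with the extra edge `uv`. -/
def AddEdge {V : Type} (G : SimpleGraph V) (u v : V) : SimpleGraph V :=
  G ⊔ fromEdgeSet {s(u, v)}

/-- `G - v`. -/
def DeleteVert {V : Type} (G : SimpleGraph V) (v : V) :=
  G.induce {u | u ≠ v}

/-- Disjoint union of graphs. -/
def DisjUnion {α β : Type} (G : SimpleGraph α) (H : SimpleGraph β) : SimpleGraph (α ⊕ β) :=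
  (G.map Sum.inl) ⊔ (H.map Sum.inr)

/-- `K₂ ∪̇ G`: a `K₂` glued to `G` at the vertex `v` (a pendant vertex). -/
def Pendant {V : Type} (G : SimpleGraph V) (v : V) : SimpleGraph (Option V) :=
  (G.map some) ⊔ fromEdgeSet {s(none, some v)}

/-- The result of subdividing the edge `uv` of `G`, the new vertex being `none`. -/
def SubdivideEdge {V : Type} (G : SimpleGraph V) (u v : V) : SimpleGraph (Option V) :=
  ((G.deleteEdges {s(u, v)}).map some) ⊔
    fromEdgeSet {s(none, some u), s(none, some v)}

/-- The contraction `G/uv` (realized on the same vertex set: `v` is absorbed into `u`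
and left as an isolated vertex, which does not affect planarity). -/
def ContractEdge {V : Type} (G : SimpleGraph V) (u v : V) : SimpleGraph V where
  Adj a b := a ≠ b ∧ ∃ x y, G.Adj x y ∧
    ((x = v ∧ a = u) ∨ (x ≠ v ∧ a = x)) ∧ ((y = v ∧ b = u) ∨ (y ≠ v ∧ b = y))
  symm := by
    refine ⟨?_⟩
    rintro a b ⟨hab, x, y, hxy, hx, hy⟩
    exact ⟨hab.symm, y, x, hxy.symm, hy, hx⟩
  loopless := by refine ⟨?_⟩; rintro a ⟨h, -⟩; exact h rfl

/-- `κ(G) ≥ k`: more than `k` vertices and no cut set of fewer than `k` vertices. -/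
def VertexConnAtLeast {V : Type} [Fintype V] (G : SimpleGraph V) (k : ℕ) : Prop :=
  k < Fintype.card V ∧
    ∀ U : Finset V, U.card < k → (G.induce ((↑U : Set V)ᶜ)).Connected

def K5e : SimpleGraph (Fin 5) := K5.deleteEdges {s(0, 1)}

def K33e : SimpleGraph (Fin 3 ⊕ Fin 3) := K33.deleteEdges {s(Sum.inl 0, Sum.inr 0)}

def K2 : SimpleGraph (Fin 2) := ⊤

/-- A planar graph is maximally planar (equivalently, a plane triangulation)
if adding any edge between nonadjacent vertices destroys planarity. -/
def MaximalPlanar {V : Type} (G : SimpleGraph V) : Prop :=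
  Planar G ∧ ∀ u v : V, u ≠ v → ¬ G.Adj u v → ¬ Planar (AddEdge G u v)

/-- Almost nonplanar. -/
def AN {V : Type} (G : SimpleGraph V) : Prop :=
  Planar G ∧ ∃ u v : V, u ≠ v ∧ ¬ G.Adj u v ∧ ¬ Planar (AddEdge G u v)

/-- Completely almost nonplanar. -/
def CAN {V : Type} (G : SimpleGraph V) : Prop :=
  Planar G ∧ (∃ u v : V, u ≠ v ∧ ¬ G.Adj u v) ∧
    ∀ u v : V, u ≠ v → ¬ G.Adj u v → ¬ Planar (AddEdge G u v)

/-- Completely apex: every vertex-deleted subgraph is planar. -/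
def CompletelyApex {V : Type} (G : SimpleGraph V) : Prop :=
  ∀ v : V, Planar (DeleteVert G v)

/-- Incompletely apex. -/
def IA {V : Type} (G : SimpleGraph V) : Prop :=
  ∃ v : V, ¬ Planar (DeleteVert G v)

/-- Incompletely edge apex. -/
def IE {V : Type} (G : SimpleGraph V) : Prop :=
  ∃ e ∈ G.edgeSet, ¬ Planar (G.deleteEdges {e})

/-- Incompletely contraction apex. -/
def IC {V : Type} (G : SimpleGraph V) : Prop :=
  ∃ u v : V, G.Adj u v ∧ ¬ Planar (ContractEdge G u v)

/-- Not apex. -/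
def NA {V : Type} (G : SimpleGraph V) : Prop :=
  ∀ v : V, ¬ Planar (DeleteVert G v)

/-- Not edge apex. -/
def NE {V : Type} (G : SimpleGraph V) : Prop :=
  ∀ e ∈ G.edgeSet, ¬ Planar (G.deleteEdges {e})

/-- Edge apex: some edge deletion (or the graph itself) is planar. -/
def EdgeApex {V : Type} (G : SimpleGraph V) : Prop :=
  Planar G ∨ ∃ e ∈ G.edgeSet, Planar (G.deleteEdges {e})


/-!
Write `Pᵢ c` for `Gᵢ + c`. The conclusion follows propositionally from two facts.

`P₁ c` and `P₂ c` are not both planar: their union is `G - d` for the other cut vertex `d`, and a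
one-point union of planar graphs is planar. Indeed `K₅` and `K₃,₃` are `2`-connected, so in a
model of either one the branch sets missing the glue vertex all lie on one side, and intersecting
every branch set with that side gives a model there.

`P₁ a` and `P₂ b` are not both nonplanar: they partition `V(G)`, so deleting the edges between
them (there is one, `G` being connected) gives a proper minor with fewer edges, and that minor is
still not apex because deleting any vertex leaves one of the two nonplanar sides intact.
-/

theorem SimpleGraph.Reachable.mem_of_adj_closed {α : Type*} {K : SimpleGraph α} {S : Set α}
    (hS : ∀ x y, K.Adj x y → x ∈ S → y ∈ S) {u v : α} (h : K.Reachable u v) (hu : u ∈ S) :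
    v ∈ S := by
  by_contra hv
  obtain ⟨p⟩ := h
  obtain ⟨d, -, hd₁, hd₂⟩ := p.exists_boundary_dart S hu hv
  exact hd₂ (hS _ _ d.adj hd₁)

section Minors

variable {W V : Type} {K : SimpleGraph W} {G H : SimpleGraph V}

def IsMinorModel (K : SimpleGraph W) (G : SimpleGraph V) (f : W → Set V) : Prop :=
  (∀ w, (f w).Nonempty) ∧
    (∀ w, (G.induce (f w)).Connected) ∧
    (Pairwise fun w₁ w₂ => Disjoint (f w₁) (f w₂)) ∧
    (∀ w₁ w₂, K.Adj w₁ w₂ → ∃ x ∈ f w₁, ∃ y ∈ f w₂, G.Adj x y)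

theorem isMinor_of_le (h : H ≤ G) : IsMinor H G :=
  ⟨fun w => {w}, fun w => Set.singleton_nonempty w, fun _ => Connected.of_subsingleton,
    fun _ _ hne => Set.disjoint_singleton.2 hne, fun w₁ w₂ hadj => ⟨w₁, rfl, w₂, rfl, h hadj⟩⟩

theorem isMinor_induce_iff {A : Set V} :
    IsMinor K (G.induce A) ↔ ∃ f : W → Set V, (∀ w, f w ⊆ A) ∧ IsMinorModel K G f := by
  constructor
  · rintro ⟨f, hne, hconn, hdisj, hadj⟩
    refine ⟨fun w => Subtype.val '' f w, fun w => by simp, fun w => (hne w).image _,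
      fun w => ?_, fun w₁ w₂ hne' => ?_, fun w₁ w₂ h => ?_⟩
    · refine (hconn w).map ⟨fun x => ⟨x.1.1, x.1, x.2, rfl⟩, fun h => h⟩ ?_
      rintro ⟨-, x, hx, rfl⟩
      exact ⟨⟨x, hx⟩, rfl⟩
    · exact (Set.disjoint_image_iff Subtype.val_injective).2 (hdisj hne')
    · obtain ⟨x, hx, y, hy, hxy⟩ := hadj _ _ h
      exact ⟨x, ⟨x, hx, rfl⟩, y, ⟨y, hy, rfl⟩, hxy⟩
  · rintro ⟨f, hsub, hne, hconn, hdisj, hadj⟩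
    refine ⟨fun w => Subtype.val ⁻¹' f w, fun w => ?_, fun w => ?_,
      fun w₁ w₂ hne' => (hdisj hne').preimage _, fun w₁ w₂ h => ?_⟩
    · obtain ⟨x, hx⟩ := hne w
      exact ⟨⟨x, hsub w hx⟩, hx⟩
    · refine (hconn w).map ⟨fun y => ⟨⟨y.1, hsub w y.2⟩, y.2⟩, fun h => h⟩ ?_
      rintro ⟨⟨x, -⟩, hx⟩
      exact ⟨⟨x, hx⟩, rfl⟩
    · obtain ⟨x, hx, y, hy, hxy⟩ := hadj _ _ h
      exact ⟨⟨x, hsub _ hx⟩, hx, ⟨y, hsub _ hy⟩, hy, hxy⟩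

theorem IsMinor.induce_mono {Q R : Set V} (hQR : Q ⊆ R)
    (hGH : ∀ x ∈ Q, ∀ y ∈ Q, G.Adj x y → H.Adj x y) (h : IsMinor K (G.induce Q)) :
    IsMinor K (H.induce R) := by
  obtain ⟨f, hsub, hne, hconn, hdisj, hadj⟩ := isMinor_induce_iff.1 h
  refine isMinor_induce_iff.2 ⟨f, fun w => (hsub w).trans hQR, hne, fun w => ?_, hdisj, ?_⟩
  · exact (hconn w).mono fun x y hxy => hGH _ (hsub w x.2) _ (hsub w y.2) hxy
  · intro w₁ w₂ h
    obtain ⟨x, hx, y, hy, hxy⟩ := hadj _ _ h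
    exact ⟨x, hx, y, hy, hGH _ (hsub _ hx) _ (hsub _ hy) hxy⟩

theorem Planar.induce_anti {Q R : Set V} (hQR : Q ⊆ R)
    (hGH : ∀ x ∈ Q, ∀ y ∈ Q, G.Adj x y → H.Adj x y) (h : Planar (H.induce R)) :
    Planar (G.induce Q) :=
  ⟨fun h5 => h.1 (h5.induce_mono hQR hGH), fun h33 => h.2 (h33.induce_mono hQR hGH)⟩

theorem IsMinor.card_edgeSet_le [Finite V] (h : IsMinor K G) :
    Nat.card K.edgeSet ≤ Nat.card G.edgeSet := by
  obtain ⟨f, -, -, hdisj, hadj⟩ := h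
  have hbranch : ∀ {z : V} {u u' : W}, z ∈ f u → z ∈ f u' → u = u' := fun h₁ h₂ =>
    by_contra fun hne => Set.disjoint_left.1 (hdisj hne) h₁ h₂
  have hlift : ∀ e : K.edgeSet, ∃ x y, G.Adj x y ∧
      ∃ w₁ w₂, e.1 = s(w₁, w₂) ∧ x ∈ f w₁ ∧ y ∈ f w₂ := by
    rintro ⟨e, he⟩
    induction e using Sym2.ind with
    | _ w₁ w₂ =>
      obtain ⟨x, hx, y, hy, hxy⟩ := hadj _ _ he
      exact ⟨x, y, hxy, w₁, w₂, rfl, hx, hy⟩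
  choose x y hxy w₁ w₂ he hx hy using hlift
  refine Nat.card_le_card_of_injective (fun e => ⟨s(x e, y e), hxy e⟩) fun e₁ e₂ h => ?_
  apply Subtype.ext
  rw [he e₁, he e₂]
  rcases Sym2.eq_iff.1 (congrArg Subtype.val h) with ⟨h₁, h₂⟩ | ⟨h₁, h₂⟩
  · rw [hbranch (hx e₁) (h₁ ▸ hx e₂), hbranch (hy e₁) (h₂ ▸ hy e₂)]
  · rw [hbranch (hx e₁) (h₁ ▸ hy e₂), hbranch (hy e₁) (h₂ ▸ hx e₂), Sym2.eq_swap]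

theorem properMinor_of_lt [Finite V] (h : H < G) : ProperMinor H G := by
  refine ⟨isMinor_of_le h.le, fun hGH => ?_⟩
  have hlt := Set.ncard_lt_ncard (edgeSet_ssubset_edgeSet.2 h) (Set.toFinite _)
  have hle := hGH.card_edgeSet_le
  rw [Nat.card_coe_set_eq, Nat.card_coe_set_eq] at hle
  omega

end Minors

section OnePointUnion

variable {W V : Type} {K : SimpleGraph W} {G : SimpleGraph V} {A B X : Set V} {c : V}
  {f : W → Set V}

theorem connected_induce_inter_of_mem
    (hcross : ∀ x ∈ A, ∀ y ∈ B, x ≠ c → y ≠ c → ¬ G.Adj x y) (hcA : c ∈ A)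
    (hX : (G.induce X).Connected) (hXAB : X ⊆ A ∪ B) (hcX : c ∈ X) :
    (G.induce (X ∩ A)).Connected := by
  have hc : c ∈ X ∩ A := ⟨hcX, hcA⟩
  have key : ∀ u : X, ∀ hu : (u : V) ∈ A,
      (G.induce (X ∩ A)).Reachable ⟨c, hc⟩ ⟨u, u.2, hu⟩ := by
    intro u
    refine (hX.preconnected ⟨c, hcX⟩ u).mem_of_adj_closed
      (S := {z : X | ∀ hz : (z : V) ∈ A, (G.induce (X ∩ A)).Reachable ⟨c, hc⟩ ⟨z, z.2, hz⟩})
      ?_ fun _ => Reachable.refl _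
    intro z z' hzz' hz hz'A
    by_cases hzA : (z : V) ∈ A
    · exact (hz hzA).trans (Adj.reachable hzz')
    · -- an edge leaving `A` inside `X` must end at `c`
      have hz'c : (z' : V) = c := by
        by_contra hz'c
        exact hcross _ hz'A _ ((hXAB z.2).resolve_left hzA) hz'c (fun h => hzA (h ▸ hcA))
          hzz'.symm
      exact (Subtype.ext hz'c.symm : (⟨c, hc⟩ : ↥(X ∩ A)) = ⟨z', z'.2, hz'A⟩) ▸ Reachable.refl _
  exact (connected_iff_exists_forall_reachable _).2 ⟨⟨c, hc⟩, fun u => key ⟨u, u.2.1⟩ u.2.2⟩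

theorem subset_or_subset_of_preconnected_induce
    (hcross : ∀ x ∈ A, ∀ y ∈ B, x ≠ c → y ≠ c → ¬ G.Adj x y)
    (hX : (G.induce X).Preconnected) (hXAB : X ⊆ A ∪ B) (hcX : c ∉ X) : X ⊆ A ∨ X ⊆ B := by
  by_contra! h
  obtain ⟨⟨x, hx, hxA⟩, ⟨y, hy, hyB⟩⟩ := And.intro (Set.not_subset.1 h.1) (Set.not_subset.1 h.2)
  obtain ⟨p⟩ := hX ⟨y, hy⟩ ⟨x, hx⟩
  obtain ⟨d, -, hd₁, hd₂⟩ :=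
    p.exists_boundary_dart {z | (z : V) ∈ A} ((hXAB hy).resolve_right hyB) hxA
  exact hcross _ hd₁ _ ((hXAB d.snd.2).resolve_left hd₂) (fun h => hcX (h ▸ d.fst.2))
    (fun h => hcX (h ▸ d.snd.2)) d.adj

theorem isMinor_induce_of_forall_subset
    (hcross : ∀ x ∈ A, ∀ y ∈ B, x ≠ c → y ≠ c → ¬ G.Adj x y) (hcA : c ∈ A)
    (hsub : ∀ w, f w ⊆ A ∪ B) (hf : IsMinorModel K G f) (hA : ∀ w, c ∉ f w → f w ⊆ A) :
    IsMinor K (G.induce A) := by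
  obtain ⟨hne, hconn, hdisj, hadj⟩ := hf
  have hinter : ∀ w, c ∉ f w → f w ∩ A = f w := fun w hw => Set.inter_eq_left.2 (hA w hw)
  have hmemA : ∀ u v, u ≠ v → ∀ x ∈ f u, ∀ y ∈ f v, G.Adj x y → x ∈ A := by
    intro u v huv x hx y hy hxy
    by_cases hcu : c ∈ f u
    · have hcv : c ∉ f v := Set.disjoint_left.1 (hdisj huv) hcu
      by_contra hxA
      exact hcross y (hA v hcv hy) x ((hsub u hx).resolve_left hxA)
        (fun h => hcv (h ▸ hy)) (fun h => hxA (h ▸ hcA)) hxy.symm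
    · exact hA u hcu hx
  refine isMinor_induce_iff.2 ⟨fun w => f w ∩ A, fun w => Set.inter_subset_right,
    fun w => ?_, fun w => ?_,
    fun u v huv => (hdisj huv).mono Set.inter_subset_left Set.inter_subset_left,
    fun u v huv => ?_⟩
  · by_cases hcw : c ∈ f w
    · exact ⟨c, hcw, hcA⟩
    · simpa only [hinter w hcw] using hne w
  · by_cases hcw : c ∈ f w
    · exact connected_induce_inter_of_mem hcross hcA (hconn w) (hsub w) hcw
    · change (G.induce (f w ∩ A)).Connected
      rw [hinter w hcw]
      exact hconn w
  · obtain ⟨x, hx, y, hy, hxy⟩ := hadj u v huv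
    exact ⟨x, ⟨hx, hmemA u v huv.ne x hx y hy hxy⟩,
      y, ⟨hy, hmemA v u huv.ne' y hy x hx hxy.symm⟩, hxy⟩

theorem VertexConnAtLeast.connected_induce_compl [Fintype W] (hK : VertexConnAtLeast K 2)
    {s : Set W} (hs : s.Subsingleton) : (K.induce sᶜ).Connected := by
  have hcard : hs.finite.toFinset.card < 2 := Nat.lt_succ_of_le <|
    Finset.card_le_one.2 fun a ha b hb => hs (by simpa using ha) (by simpa using hb)
  have := hK.2 _ hcard
  rwa [Set.Finite.coe_toFinset] at this

/-- The branch sets avoiding `c` induce `K` minus at most one vertex, which is connected. -/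
theorem forall_subset_or_forall_subset [Fintype W]
    (hcross : ∀ x ∈ A, ∀ y ∈ B, x ≠ c → y ≠ c → ¬ G.Adj x y) (hK : VertexConnAtLeast K 2)
    (hsub : ∀ w, f w ⊆ A ∪ B) (hf : IsMinorModel K G f) :
    (∀ w, c ∉ f w → f w ⊆ A) ∨ (∀ w, c ∉ f w → f w ⊆ B) := by
  obtain ⟨-, hconn, hdisj, hadj⟩ := hf
  have hside : ∀ w, c ∉ f w → f w ⊆ A ∨ f w ⊆ B := fun w hw =>
    subset_or_subset_of_preconnected_induce hcross (hconn w).preconnected (hsub w) hw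
  have hfree : (K.induce {w | c ∈ f w}ᶜ).Preconnected :=
    (hK.connected_induce_compl fun u hu v hv =>
      by_contra fun huv => Set.disjoint_left.1 (hdisj huv) hu hv).preconnected
  by_contra! h
  obtain ⟨⟨u, hu, huA⟩, ⟨v, hv, hvB⟩⟩ := h
  refine huA ((hfree ⟨v, hv⟩ ⟨u, hu⟩).mem_of_adj_closed
    (S := {w : ↥{w | c ∈ f w}ᶜ | f w ⊆ A}) ?_ ((hside v hv).resolve_right hvB))
  intro w w' hww' hwA
  refine (hside w' w'.2).resolve_right fun hw'B => ?_
  obtain ⟨x, hx, y, hy, hxy⟩ := hadj _ _ hww'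
  exact hcross x (hwA hx) y (hw'B hy) (fun h => w.2 (h ▸ hx)) (fun h => w'.2 (h ▸ hy)) hxy

theorem IsMinor.induce_left_or_right [Fintype W] (hK : VertexConnAtLeast K 2)
    (hcross : ∀ x ∈ A, ∀ y ∈ B, x ≠ c → y ≠ c → ¬ G.Adj x y) (hcA : c ∈ A) (hcB : c ∈ B)
    (h : IsMinor K (G.induce (A ∪ B))) : IsMinor K (G.induce A) ∨ IsMinor K (G.induce B) := by
  obtain ⟨f, hsub, hf⟩ := isMinor_induce_iff.1 h
  have hcross' : ∀ x ∈ B, ∀ y ∈ A, x ≠ c → y ≠ c → ¬ G.Adj x y :=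
    fun x hx y hy hxc hyc hxy => hcross y hy x hx hyc hxc hxy.symm
  rcases forall_subset_or_forall_subset hcross hK hsub hf with hA | hB
  · exact Or.inl (isMinor_induce_of_forall_subset hcross hcA hsub hf hA)
  · exact Or.inr (isMinor_induce_of_forall_subset hcross' hcB
      (fun w => (hsub w).trans (Set.union_comm A B).le) hf hB)

theorem vertexConnAtLeast_K5 : VertexConnAtLeast K5 2 := by
  refine ⟨by simp, fun U hU => ?_⟩
  obtain ⟨v, hv⟩ : (↑U : Set (Fin 5))ᶜ.Nonempty := by
    refine Set.nonempty_compl.2 fun h => ?_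
    rw [Finset.coe_eq_univ] at h
    simp [h] at hU
  have : Nonempty ↥(↑U : Set (Fin 5))ᶜ := ⟨⟨v, hv⟩⟩
  rw [K5, induce_top]
  exact connected_top

theorem connected_induce_completeBipartiteGraph {α β : Type*} {s : Set (α ⊕ β)} {i : α} {j : β}
    (hi : Sum.inl i ∈ s) (hj : Sum.inr j ∈ s) :
    ((completeBipartiteGraph α β).induce s).Connected := by
  have hij : ((completeBipartiteGraph α β).induce s).Adj ⟨_, hi⟩ ⟨_, hj⟩ := by simp
  refine (connected_iff_exists_forall_reachable _).2 ⟨⟨_, hi⟩, ?_⟩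
  rintro ⟨k | k, hk⟩
  · exact hij.reachable.trans (Adj.reachable (by simp))
  · exact Adj.reachable (by simp)

theorem vertexConnAtLeast_K33 : VertexConnAtLeast K33 2 := by
  refine ⟨by simp, fun U hU => ?_⟩
  obtain ⟨_, hi', hi⟩ := Finset.exists_mem_notMem_of_card_lt_card (s := U)
    (t := Finset.univ.map (Function.Embedding.inl : Fin 3 ↪ Fin 3 ⊕ Fin 3)) (by simp; omega)
  obtain ⟨_, hj', hj⟩ := Finset.exists_mem_notMem_of_card_lt_card (s := U)
    (t := Finset.univ.map (Function.Embedding.inr : Fin 3 ↪ Fin 3 ⊕ Fin 3)) (by simp; omega)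
  obtain ⟨i, -, rfl⟩ := Finset.mem_map.1 hi'
  obtain ⟨j, -, rfl⟩ := Finset.mem_map.1 hj'
  exact connected_induce_completeBipartiteGraph (s := (↑U : Set _)ᶜ) (i := i) (j := j) hi hj

theorem Planar.induce_union (hcross : ∀ x ∈ A, ∀ y ∈ B, x ≠ c → y ≠ c → ¬ G.Adj x y)
    (hcA : c ∈ A) (hcB : c ∈ B) (hA : Planar (G.induce A)) (hB : Planar (G.induce B)) :
    Planar (G.induce (A ∪ B)) :=
  ⟨fun h => (h.induce_left_or_right vertexConnAtLeast_K5 hcross hcA hcB).elim hA.1 hB.1,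
    fun h => (h.induce_left_or_right vertexConnAtLeast_K33 hcross hcA hcB).elim hA.2 hB.2⟩

end OnePointUnion

theorem VertexConnAtLeast.connected {V : Type} [Fintype V] {G : SimpleGraph V} {k : ℕ}
    (hG : VertexConnAtLeast G k) (hk : 0 < k) : G.Connected := by
  have := hG.2 ∅ (by simpa using hk)
  rw [Finset.coe_empty, Set.compl_empty] at this
  exact (induceUnivIso G).connected_iff.1 this

/-- If both sides of a cut `(P, Pᶜ)` induce nonplanar graphs, deleting the edges of the cut gives
a proper minor that is still not apex. -/
theorem MinorMinimal.planar_or_planar_compl {V : Type} [Finite V] {G : SimpleGraph V}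
    (hG : MinorMinimal (fun {_} H => NA H) G) (hconn : G.Preconnected) {P : Set V}
    {x y : V} (hx : x ∈ P) (hy : y ∉ P) :
    Planar (G.induce P) ∨ Planar (G.induce Pᶜ) := by
  by_contra! h
  let H : SimpleGraph V := G ⊓ fromRel fun u v => (u ∈ P ↔ v ∈ P)
  have hsame : ∀ {u v}, G.Adj u v → (u ∈ P ↔ v ∈ P) → H.Adj u v := fun huv hP =>
    ⟨huv, huv.ne, Or.inl hP⟩
  have hNA : NA H := by
    intro v hv
    by_cases hvP : v ∈ P
    · exact h.2 (hv.induce_anti (fun u hu => ne_of_mem_of_not_mem hvP hu |>.symm)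
        fun _ hx _ hy hxy => hsame hxy (iff_of_false hx hy))
    · exact h.1 (hv.induce_anti (fun u hu => ne_of_mem_of_not_mem hu hvP)
        fun _ hx _ hy hxy => hsame hxy (iff_of_true hx hy))
  obtain ⟨p⟩ := hconn x y
  obtain ⟨d, -, hd₁, hd₂⟩ := p.exists_boundary_dart P hx hy
  have hlt : H < G := lt_of_le_not_ge inf_le_left fun hle => by
    simpa [H, hd₁, hd₂] using (hle d.adj).2
  exact hG.2 V H (properMinor_of_lt hlt) hNA

section TwoCut

variable {V : Type} {G : SimpleGraph V} {S₁ S₂ : Set V} {c d : V}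

theorem not_planar_and_planar_of_NA (hNA : NA G) (hcd : c ≠ d)
    (hpart : S₁ ∪ S₂ = {v | v ≠ c ∧ v ≠ d}) (hsep : ∀ x ∈ S₁, ∀ y ∈ S₂, ¬ G.Adj x y) :
    ¬ (Planar (G.induce (S₁ ∪ {c})) ∧ Planar (G.induce (S₂ ∪ {c}))) := by
  rintro ⟨h₁, h₂⟩
  have hdel : (S₁ ∪ {c}) ∪ (S₂ ∪ {c}) = {v | v ≠ d} := by
    ext v
    have hv := Set.ext_iff.1 hpart v
    simp only [Set.mem_union, Set.mem_singleton_iff, Set.mem_ofPred_eq] at hv ⊢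
    by_cases hvc : v = c <;> simp_all
  refine hNA d ?_
  rw [DeleteVert, ← hdel]
  refine h₁.induce_union (fun x hx y hy hxc hyc => ?_) (Or.inr rfl) (Or.inr rfl) h₂
  exact hsep x (hx.resolve_right hxc) y (hy.resolve_right hyc)

theorem planar_or_planar_of_minorMinimal [Fintype V]
    (hG : MinorMinimal (fun {_} H => NA H) G) (hconn : VertexConnAtLeast G 2) (hcd : c ≠ d)
    (hpart : S₁ ∪ S₂ = {v | v ≠ c ∧ v ≠ d}) (hdisj : Disjoint S₁ S₂) :
    Planar (G.induce (S₁ ∪ {c})) ∨ Planar (G.induce (S₂ ∪ {d})) := by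
  have hcompl : S₂ ∪ {d} = (S₁ ∪ {c})ᶜ := by
    ext v
    have hv := Set.ext_iff.1 hpart v
    have hv₁₂ : v ∈ S₁ → v ∉ S₂ := fun h => Set.disjoint_left.1 hdisj h
    simp only [Set.mem_union, Set.mem_singleton_iff, Set.mem_compl_iff, Set.mem_ofPred_eq]
      at hv ⊢
    grind
  rw [hcompl]
  exact hG.planar_or_planar_compl (hconn.connected two_pos).preconnected (x := c) (Or.inr rfl)
    (y := d) (show d ∈ (S₁ ∪ {c})ᶜ from hcompl ▸ Or.inr rfl)

end TwoCut

theorem stmt_15_general {V : Type} [Fintype V] (G : SimpleGraph V)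
    (hmm : MinorMinimal (fun {_} H => NA H) G)
    (hconn : VertexConnAtLeast G 2 ∧ ¬ VertexConnAtLeast G 3)
    (a b : V) (hab : a ≠ b) (S1 S2 : Set V)
    (hpart : S1 ∪ S2 = {v | v ≠ a ∧ v ≠ b}) (hdisj : Disjoint S1 S2)
    (hsep : ∀ x ∈ S1, ∀ y ∈ S2, ¬ G.Adj x y) :
    (Planar (G.induce (S1 ∪ {a})) ∧ Planar (G.induce (S1 ∪ {b})) ∧
      ¬ Planar (G.induce (S2 ∪ {a})) ∧ ¬ Planar (G.induce (S2 ∪ {b}))) ∨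
    (Planar (G.induce (S2 ∪ {a})) ∧ Planar (G.induce (S2 ∪ {b})) ∧
      ¬ Planar (G.induce (S1 ∪ {a})) ∧ ¬ Planar (G.induce (S1 ∪ {b}))) := by
  have hpart' : S1 ∪ S2 = {v | v ≠ b ∧ v ≠ a} := by simpa only [and_comm] using hpart
  have hPa := not_planar_and_planar_of_NA hmm.1 hab hpart hsep
  have hPb := not_planar_and_planar_of_NA hmm.1 hab.symm hpart' hsep
  have hNab := planar_or_planar_of_minorMinimal hmm hconn.1 hab hpart hdisj
  have hNba := planar_or_planar_of_minorMinimal hmm hconn.1 hab.symm hpart' hdisj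
  tauto

/-- For a minor minimal not-apex graph of connectivity two with `2`-cut `{a, b}` and
`G - a,b = G₁ ⊔ G₂`: up to relabeling, `G₁ + a` and `G₁ + b` are planar while
`G₂ + a` and `G₂ + b` are nonplanar. -/
theorem stmt_15 {V : Type} [Fintype V] (G : SimpleGraph V)
    (hmm : MinorMinimal (fun {_} H => NA H) G)
    (hconn : VertexConnAtLeast G 2 ∧ ¬ VertexConnAtLeast G 3)
    (a b : V) (hab : a ≠ b) (S1 S2 : Set V)
    (hpart : S1 ∪ S2 = {v | v ≠ a ∧ v ≠ b}) (hdisj : Disjoint S1 S2)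
    (h1 : S1.Nonempty) (h2 : S2.Nonempty)
    (hsep : ∀ x ∈ S1, ∀ y ∈ S2, ¬ G.Adj x y) :
    (Planar (G.induce (S1 ∪ {a})) ∧ Planar (G.induce (S1 ∪ {b})) ∧
      ¬ Planar (G.induce (S2 ∪ {a})) ∧ ¬ Planar (G.induce (S2 ∪ {b}))) ∨
    (Planar (G.induce (S2 ∪ {a})) ∧ Planar (G.induce (S2 ∪ {b})) ∧
      ¬ Planar (G.induce (S1 ∪ {a})) ∧ ¬ Planar (G.induce (S1 ∪ {b}))) :=
  stmt_15_general G hmm hconn a b hab S1 S2 hpart hdisj hsep
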